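/- arXiv:1802.09856 — 2 statements merged into one kernel-verified Lean document; each statement's English description precedes it below -/
import Mathlib

section
/- Let R_2 be a 312-avoiding full rook placement on a Ferrers shape λ, let u_1, ..., u_{a_i} be consecutive vertices along the right border of a band of a_i consecutive rows, and suppose I_{R_2}(u_{j+1}) = I_{R_2}(u_j) for j = 1, ..., a_i - 1, where I_{R_2}(v) is the length of the longest increasing chain of 1's weakly to the left and below of v. Then the 1's of R_2 located in this band are arranged in decreasing fashion: for any two 1's in the band at positions (c, r) and (c', r') with c < c', we have r > r'. -/
/-- Two lists of naturals are in the same relative order: equal length and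
corresponding entries compare the same way (this also forces equalities to match). -/
def SameRelOrder (u v : List ℕ) : Prop :=
  u.length = v.length ∧
    ∀ i j, i < u.length → j < u.length →
      (u.getD i 0 < u.getD j 0 ↔ v.getD i 0 < v.getD j 0)

/-- The word `w` contains the pattern `x`. -/
def WContains (w x : List ℕ) : Prop :=
  ∃ u : List ℕ, u.Sublist w ∧ SameRelOrder u x

/-- Number of words with exactly `a.getD i 0` letters `i+1` (letters are positive)
avoiding every pattern in `Ω`. -/
noncomputable def WordCount (a : List ℕ) (Ω : List (List ℕ)) : ℕ :=
  Nat.card {w : List ℕ // (∀ l ∈ w, 0 < l) ∧ (∀ i, w.count (i + 1) = a.getD i 0) ∧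
    ∀ x ∈ Ω, ¬ WContains w x}

/-- A Ferrers shape: row lengths (listed bottom to top) are non-increasing and positive. -/
def IsFerrers (lam : List ℕ) : Prop :=
  lam.Pairwise (· ≥ ·) ∧ ∀ t ∈ lam, 0 < t

/-- A 0-1-filling of the shape `lam` with one 1 per column, encoded as the function `f`
sending each column to the (0-based) row of its 1, contains the pattern `x`:
there are columns `c 0 < c 1 < ⋯` whose rows are in the same relative order as `x`
and such that the full submatrix on these rows and columns lies inside the shape. -/
def FContains (lam : List ℕ) {n : ℕ} (f : Fin n → ℕ) (x : List ℕ) : Prop :=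
  ∃ c : Fin x.length → Fin n, StrictMono c ∧
    (∀ j k : Fin x.length, (f (c j) < f (c k) ↔ x.get j < x.get k)) ∧
    (∀ j k : Fin x.length, ((c k : ℕ)) < lam.getD (f (c j)) 0)

/-- 0-1-fillings of the Ferrers shape `lam` with `n` columns, exactly one 1 in each column
(the 1 of column `c` lying in row `f c`, inside the shape), exactly `a.getD i 0` ones in
row `i`, avoiding all patterns in `Ω`. -/
def FillSet (n : ℕ) (lam a : List ℕ) (Ω : List (List ℕ)) : Set (Fin n → ℕ) :=
  {f | (∀ c : Fin n, (c : ℕ) < lam.getD (f c) 0) ∧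
       (∀ i, (Finset.univ.filter fun c => f c = i).card = a.getD i 0) ∧
       ∀ x ∈ Ω, ¬ FContains lam f x}

/-- The number of 0-1-fillings of `lam` (with `lam.getD 0 0` columns, i.e. one column for
each cell of the bottom row) with one 1 per column, `a.getD i 0` ones in row `i`, avoiding
all patterns in `Ω`. -/
noncomputable def FillingCount (lam a : List ℕ) (Ω : List (List ℕ)) : ℕ :=
  Nat.card (FillSet (lam.getD 0 0) lam a Ω)

/-- Two sets of patterns are shape-Wilf-equivalent for words. -/
def ShapeWilfEq (Ω Sig : List (List ℕ)) : Prop :=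
  ∀ lam a : List ℕ, IsFerrers lam → a.length = lam.length → (∀ t ∈ a, 0 < t) →
    FillingCount lam a Ω = FillingCount lam a Sig

/-- There is an increasing chain of `k` ones of the filling `f` in the region consisting
of the rows with index `< R` and the columns with index `< C`. -/
def IncChain {n : ℕ} (f : Fin n → ℕ) (R C k : ℕ) : Prop :=
  ∃ c : Fin k → Fin n, StrictMono c ∧ (∀ i, (c i : ℕ) < C ∧ f (c i) < R) ∧
    ∀ i j : Fin k, i < j → f (c i) < f (c j)

/-- `I(v)` for the vertex `v` on the right border at height `R` and horizontal position
`C`: the length of the longest increasing chain of ones weakly left and below of `v`. -/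
noncomputable def Ival {n : ℕ} (f : Fin n → ℕ) (R C : ℕ) : ℕ :=
  sSup {k | IncChain f R C k}

/-
Suppose two 1's of the band, in columns `c < c'`, were increasing. Take a longest increasing
chain weakly below the row of `c`, inside the band width `L`. Every element of it except the
topmost lies strictly south-west of `c`: otherwise it would form a 312 with `c` and its
successor in the chain, and the whole 3 × 3 submatrix lies in the shape since the band row
of `c` has length `L`. Dropping the top element and appending `c` and `c'` gives a longer
chain below the row of `c'`, contradicting that `I` is constant along the band.
-/

lemma List.getD_antitone_of_pairwise_ge {lam : List ℕ} (h : lam.Pairwise (· ≥ ·)) {i j : ℕ}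
    (hij : i ≤ j) : lam.getD j 0 ≤ lam.getD i 0 := by
  by_cases hj : j < lam.length
  · rw [List.getD_eq_getElem _ _ (hij.trans_lt hj), List.getD_eq_getElem _ _ hj]
    rcases hij.eq_or_lt with rfl | hlt
    · exact le_rfl
    · exact List.pairwise_iff_getElem.mp h i j (hij.trans_lt hj) hj hlt
  · rw [List.getD_eq_default _ _ (not_lt.mp hj)]
    exact Nat.zero_le _

lemma Fin.strictMono_snoc {α : Type*} [Preorder α] {k : ℕ} {g : Fin k → α} {x : α}
    (hg : StrictMono g) (hx : ∀ i, g i < x) :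
    StrictMono (Fin.snoc g x : Fin (k + 1) → α) := by
  intro i j hij
  induction j using Fin.lastCases with
  | last =>
    induction i using Fin.lastCases with
    | last => exact absurd hij (lt_irrefl _)
    | cast i => simpa using hx i
  | cast j =>
    induction i using Fin.lastCases with
    | last => exact absurd hij (not_lt.mpr (Fin.le_last _))
    | cast i => simpa using hg (Fin.castSucc_lt_castSucc_iff.mp hij)

lemma injective_of_mem_fillSet_replicate_one {lam : List ℕ} {n : ℕ} {f : Fin n → ℕ}
    {Ω : List (List ℕ)} (hf : f ∈ FillSet n lam (List.replicate lam.length 1) Ω) :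
    Function.Injective f := by
  obtain ⟨hshape, hrows, -⟩ := hf
  intro x y hxy
  have hx : f x < lam.length := by
    by_contra! h
    simpa only [List.getD_eq_default _ _ h, Nat.not_lt_zero] using hshape x
  have hcard : (Finset.univ.filter fun z => f z = f x).card ≤ 1 := by
    rw [hrows, List.getD_eq_getElem _ _ (by simpa using hx), List.getElem_replicate]
  exact Finset.card_le_one.mp hcard x (by simp) y (by simp [hxy])

lemma fContains_312_of_lt {lam : List ℕ} (hF : lam.Pairwise (· ≥ ·)) {n : ℕ} {f : Fin n → ℕ}
    {x₁ x₂ x₃ : Fin n} (h₁₂ : x₁ < x₂) (h₂₃ : x₂ < x₃) (hf₂₃ : f x₂ < f x₃)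
    (hf₃₁ : f x₃ < f x₁) (hx₃ : (x₃ : ℕ) < lam.getD (f x₁) 0) :
    FContains lam f [3, 1, 2] := by
  have hrow : ∀ r ≤ f x₁, (x₃ : ℕ) < lam.getD r 0 := fun r hr =>
    hx₃.trans_le (List.getD_antitone_of_pairwise_ge hF hr)
  have hcol₁ : (x₁ : ℕ) < x₃ := h₁₂.trans h₂₃
  have hcol₂ : (x₂ : ℕ) < x₃ := h₂₃
  refine ⟨![x₁, x₂, x₃], ?_, ?_, ?_⟩
  · simp [StrictMono, Fin.forall_fin_succ, h₁₂, h₂₃, h₁₂.trans h₂₃]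
  · intro j k
    fin_cases j <;> fin_cases k <;> simp <;> omega
  · intro j k
    have h₁ := hrow (f x₁) le_rfl
    have h₂ := hrow (f x₂) (by omega)
    have h₃ := hrow (f x₃) (by omega)
    simp only [List.getD_eq_getElem?_getD] at h₁ h₂ h₃
    fin_cases j <;> fin_cases k <;> simp <;> omega

namespace IncChain

variable {n : ℕ} {f : Fin n → ℕ}

lemma zero (R C : ℕ) : IncChain f R C 0 :=
  ⟨Fin.elim0, fun i => i.elim0, fun i => i.elim0, fun i => i.elim0⟩

lemma le_card {R C k : ℕ} (h : IncChain f R C k) : k ≤ n := by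
  obtain ⟨c, hc, -, -⟩ := h
  simpa using Fintype.card_le_of_injective c hc.injective

lemma le_ival {R C k : ℕ} (h : IncChain f R C k) : k ≤ Ival f R C :=
  le_csSup ⟨n, fun _ hm => hm.le_card⟩ h

lemma of_ival (R C : ℕ) : IncChain f R C (Ival f R C) :=
  Nat.sSup_mem ⟨0, zero R C⟩ ⟨n, fun _ hk => le_card hk⟩

lemma snoc {x : Fin n} {R C k : ℕ} (h : IncChain f (f x) x k) (hxC : (x : ℕ) < C)
    (hxR : f x < R) : IncChain f R C (k + 1) := by
  obtain ⟨c, hc, hreg, hinc⟩ := h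
  refine ⟨Fin.snoc c x, Fin.strictMono_snoc hc fun i => (hreg i).1, fun i => ?_, ?_⟩
  · induction i using Fin.lastCases with
    | last => simpa using ⟨hxC, hxR⟩
    | cast i => simpa using ⟨(hreg i).1.trans hxC, (hreg i).2.trans hxR⟩
  · have : StrictMono (f ∘ Fin.snoc c x) := by
      rw [Fin.comp_snoc]
      exact Fin.strictMono_snoc (fun i j hij => hinc i j hij) fun i => (hreg i).2
    exact fun i j hij => this hij

lemma pred_of_not_fContains_312 {lam : List ℕ} (hF : lam.Pairwise (· ≥ ·))
    (hinj : Function.Injective f) (hav : ¬ FContains lam f [3, 1, 2]) {c : Fin n} {C k : ℕ}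
    (h : IncChain f (f c + 1) C k) (hC : C ≤ lam.getD (f c) 0) :
    IncChain f (f c) c (k - 1) := by
  obtain _ | m := k
  · exact zero _ _
  obtain ⟨e, he, hreg, hinc⟩ := h
  have hrow_succ (i : Fin m) : f (e i.castSucc) < f (e i.succ) :=
    hinc _ _ (Fin.castSucc_lt_succ (i := i))
  have hrow (i : Fin m) : f (e i.castSucc) < f c :=
    (hrow_succ i).trans_le (Nat.lt_succ_iff.mp (hreg _).2)
  refine ⟨e ∘ Fin.castSucc, he.comp Fin.strictMono_castSucc,
    fun i => ⟨?_, hrow i⟩, fun i j hij => hinc _ _ (Fin.castSucc_lt_castSucc_iff.mpr hij)⟩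
  by_contra! hci
  have hci : c < e i.castSucc :=
    hci.lt_of_ne fun hce => (hrow i).ne (congrArg f (Fin.ext hce).symm)
  have hc_succ : c < e i.succ := hci.trans (he (Fin.castSucc_lt_succ (i := i)))
  have hrow_succ_lt : f (e i.succ) < f c :=
    (Nat.lt_succ_iff.mp (hreg _).2).lt_of_ne fun hfe => hc_succ.ne' (hinj hfe)
  exact hav (fContains_312_of_lt hF hci (he (Fin.castSucc_lt_succ (i := i))) (hrow_succ i)
    hrow_succ_lt ((hreg _).1.trans_le hC))

end IncChain

lemma eq_of_forall_succ_eq {α : Type*} {g : ℕ → α} {m N : ℕ}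
    (h : ∀ r, m ≤ r → r < N → g (r + 1) = g r) {r : ℕ} (hmr : m ≤ r) (hrN : r ≤ N) :
    g r = g m := by
  induction r, hmr using Nat.le_induction with
  | base => rfl
  | succ r hmr ih => rw [h r hmr (by omega), ih (by omega)]

theorem stmt_11_general (lam : List ℕ) (hF : IsFerrers lam) (n : ℕ)
    (f : Fin n → ℕ)
    (hf : f ∈ FillSet n lam (List.replicate lam.length 1) [[3, 1, 2]])
    (b a L : ℕ)
    (hL : ∀ r, b ≤ r → r < b + a → lam.getD r 0 = L)
    (hI : ∀ j : ℕ, 1 ≤ j → j < a → Ival f (b + j + 1) L = Ival f (b + j) L) :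
    ∀ c c' : Fin n, b ≤ f c → f c < b + a → b ≤ f c' → f c' < b + a →
      c < c' → f c' < f c := by
  intro c c' hbc hca hbc' hca' hcc'
  have hinj := injective_of_mem_fillSet_replicate_one hf
  have hav : ¬ FContains lam f [3, 1, 2] := hf.2.2 _ (by simp)
  have hIconst : ∀ r, b + 1 ≤ r → r ≤ b + a → Ival f r L = Ival f (b + 1) L :=
    fun _ => eq_of_forall_succ_eq (g := fun r => Ival f r L) (N := b + a) fun r hr hra => by
      simpa [show b + (r - b) = r by omega] using hI (r - b) (by omega) (by omega)
  by_contra! hle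
  have hlt : f c < f c' := hle.lt_of_ne (hinj.ne hcc'.ne)
  have hc'L : (c' : ℕ) < L := hL (f c') hbc' hca' ▸ hf.1 c'
  have hchain : IncChain f (f c' + 1) L (Ival f (f c + 1) L - 1 + 2) := by
    have hbelow := (IncChain.of_ival (f c + 1) L).pred_of_not_fContains_312 hF.1 hinj hav
      (hL (f c) hbc hca).ge
    exact (hbelow.snoc hcc' hlt).snoc hc'L (Nat.lt_succ_self _)
  have := hchain.le_ival
  rw [hIconst (f c' + 1) (by omega) (by omega), hIconst (f c + 1) (by omega) (by omega)] at this
  omega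

/-- If `f` is a 312-avoiding full rook placement on the Ferrers shape `lam` and the values
`I` at the vertices `u_1, …, u_a` along the right border of the band of rows
`b, …, b + a - 1` (all of common length `L`) are all equal, then the ones of `f` in this
band are arranged in decreasing fashion. -/
theorem stmt_11 (lam : List ℕ) (hF : IsFerrers lam) (n : ℕ) (hn : n = lam.getD 0 0)
    (f : Fin n → ℕ)
    (hf : f ∈ FillSet n lam (List.replicate lam.length 1) [[3, 1, 2]])
    (b a L : ℕ) (hba : b + a ≤ lam.length)
    (hL : ∀ r, b ≤ r → r < b + a → lam.getD r 0 = L)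
    (hI : ∀ j : ℕ, 1 ≤ j → j < a → Ival f (b + j + 1) L = Ival f (b + j) L) :
    ∀ c c' : Fin n, b ≤ f c → f c < b + a → b ≤ f c' → f c' < b + a →
      c < c' → f c' < f c :=
  stmt_11_general lam hF n f hf b a L hL hI
end

section
/- A filling of a Ferrers shape λ with exactly one 1 per column and a_i ones in row i avoids both 312 and 212 if and only if its blowup—obtained by replacing row i by a_i rows with the a_i ones rearranged in decreasing fashion (each 1 staying in its column, one 1 per new row)—is a 312-avoiding full rook placement of the blown-up shape. -/
/-- The blown-up shape: row `i` of `lam` is replaced by `a.getD i 0` rows of its length. -/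
def blowShape (lam a : List ℕ) : List ℕ :=
  (List.range lam.length).flatMap fun i => List.replicate (a.getD i 0) (lam.getD i 0)

/-- Index of the bottom row of the `i`-th band in the blown-up shape. -/
def blowRow (a : List ℕ) (i : ℕ) : ℕ := (a.take i).sum

/-- The decreasing blowup of a filling: the 1 of column `c` is moved into the band of rows
of the blown-up shape replacing row `f c`, the ones of each band being arranged in
decreasing fashion (each 1 staying in its column). -/
def blowupDec {n : ℕ} (a : List ℕ) (f : Fin n → ℕ) : Fin n → ℕ := fun c =>
  blowRow a (f c) +
    (a.getD (f c) 0 - 1 - (Finset.univ.filter fun c' => f c' = f c ∧ c' < c).card)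

/-!
Within the band of rows replacing row `i`, the decreasing blowup puts the 1 of the `r`-th
column (from the left) having its 1 in row `i` into the `r`-th band row from the top. Hence
the blowup preserves strict row comparisons between different rows and reverses the column
order within a row, and it is a full rook placement since the bands have exactly the right
heights. A 312 of the blowup is therefore either a 312 of the filling or, when its outer
entries come from the same row, a 212; conversely a 312 of the filling stays a 312, and a
212 becomes a 312 because its two equal entries get split in decreasing order.
-/

open Finset

lemma List.lt_length_of_lt_getD_zero {l : List ℕ} {i m : ℕ} (h : m < l.getD i 0) :
    i < l.length := by
  by_contra hi
  rw [List.getD_eq_default _ _ (not_lt.mp hi)] at h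
  exact Nat.not_lt_zero _ h

lemma card_filter_eq_getD_replicate_one {n : ℕ} {g : Fin n → ℕ} (hinj : Function.Injective g)
    (hlt : ∀ c, g c < n) (i : ℕ) :
    #{c | g c = i} = (List.replicate n 1).getD i 0 := by
  rw [List.getD_eq_getElem?_getD, List.getElem?_replicate]
  split_ifs with hi
  · let g' : Fin n → Fin n := fun c => ⟨g c, hlt c⟩
    have hsurj : Function.Surjective g' :=
      Finite.injective_iff_surjective.mp fun c c' h => hinj (congrArg Fin.val h)
    obtain ⟨c₀, hc₀⟩ := hsurj ⟨i, hi⟩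
    rw [Option.getD_some, card_eq_one]
    exact ⟨c₀, by ext c; simpa using ⟨fun h => hinj (h.trans (congrArg Fin.val hc₀).symm),
      fun h => h ▸ congrArg Fin.val hc₀⟩⟩
  · rw [Option.getD_none, card_eq_zero, filter_eq_empty_iff]
    exact fun c _ h => hi (h ▸ hlt c)

lemma fContains_312_iff {L : List ℕ} {n : ℕ} {F : Fin n → ℕ} :
    FContains L F [3, 1, 2] ↔ ∃ c : Fin 3 → Fin n, StrictMono c ∧
      F (c 1) < F (c 2) ∧ F (c 2) < F (c 0) ∧ ∀ j k, (c k : ℕ) < L.getD (F (c j)) 0 := by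
  constructor
  · rintro ⟨c, hc, hord, hshape⟩
    exact ⟨c, hc, (hord 1 2).mpr (by decide), (hord 2 0).mpr (by decide), hshape⟩
  · rintro ⟨c, hc, h12, h20, hshape⟩
    refine ⟨c, hc, fun j k => ?_, hshape⟩
    fin_cases j <;> fin_cases k <;> simp <;> omega

lemma fContains_212_iff {L : List ℕ} {n : ℕ} {F : Fin n → ℕ} :
    FContains L F [2, 1, 2] ↔ ∃ c : Fin 3 → Fin n, StrictMono c ∧
      F (c 1) < F (c 2) ∧ F (c 0) = F (c 2) ∧ ∀ j k, (c k : ℕ) < L.getD (F (c j)) 0 := by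
  constructor
  · rintro ⟨c, hc, hord, hshape⟩
    have h02 := (hord 0 2).not.mpr (by decide)
    have h20 := (hord 2 0).not.mpr (by decide)
    exact ⟨c, hc, (hord 1 2).mpr (by decide), by omega, hshape⟩
  · rintro ⟨c, hc, h12, h02, hshape⟩
    refine ⟨c, hc, fun j k => ?_, hshape⟩
    fin_cases j <;> fin_cases k <;> simp <;> omega

section BlownUpShape

lemma blowRow_succ (a : List ℕ) (i : ℕ) : blowRow a (i + 1) = blowRow a i + a.getD i 0 := by
  rw [blowRow, blowRow, List.take_add_one, List.sum_append, List.getD_eq_getElem?_getD]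
  cases a[i]? <;> simp

lemma blowRow_mono (a : List ℕ) : Monotone (blowRow a) :=
  monotone_nat_of_le_succ fun i => by rw [blowRow_succ]; omega

lemma blowRow_length (a : List ℕ) : blowRow a a.length = a.sum := by
  rw [blowRow, List.take_length]

lemma length_flatMap_range_replicate (lam a : List ℕ) (m : ℕ) :
    ((List.range m).flatMap fun i => List.replicate (a.getD i 0) (lam.getD i 0)).length
      = blowRow a m := by
  induction m with
  | zero => simp [blowRow]
  | succ m ih =>
    rw [List.range_succ, List.flatMap_append, List.flatMap_singleton, List.length_append, ih,
      List.length_replicate, blowRow_succ]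

lemma blowShape_length (lam a : List ℕ) : (blowShape lam a).length = blowRow a lam.length :=
  length_flatMap_range_replicate lam a lam.length

lemma getD_blowShape_blowRow_add (lam a : List ℕ) {i k : ℕ} (hi : i < lam.length)
    (hk : k < a.getD i 0) :
    (blowShape lam a).getD (blowRow a i + k) 0 = lam.getD i 0 := by
  let band := fun j => List.replicate (a.getD j 0) (lam.getD j 0)
  have hsplit : blowShape lam a = ((List.range i).flatMap band ++ band i) ++
      (List.drop (i + 1) (List.range lam.length)).flatMap band := by
    conv_lhs => rw [blowShape, ← List.take_append_drop (i + 1) (List.range lam.length)]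
    rw [List.flatMap_append, List.take_range, Nat.min_eq_left hi, List.range_succ,
      List.flatMap_append, List.flatMap_singleton]
  have hpre : ((List.range i).flatMap band).length = blowRow a i :=
    length_flatMap_range_replicate lam a i
  have hband : (band i).length = a.getD i 0 := List.length_replicate
  rw [hsplit, List.getD_append _ _ _ _ (by rw [List.length_append, hpre, hband]; omega),
    List.getD_append_right _ _ _ _ (by omega), hpre, Nat.add_sub_cancel_left,
    List.getD_replicate _ hk]

end BlownUpShape

section DecreasingBlowup

variable {a : List ℕ} {n : ℕ} {f : Fin n → ℕ}

def rowRank (f : Fin n → ℕ) (c : Fin n) : ℕ := #{c' | f c' = f c ∧ c' < c}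

lemma blowupDec_apply (c : Fin n) :
    blowupDec a f c = blowRow a (f c) + (a.getD (f c) 0 - 1 - rowRank f c) := rfl

lemma rowRank_lt (hcount : ∀ i, #{c | f c = i} = a.getD i 0) (c : Fin n) :
    rowRank f c < a.getD (f c) 0 := by
  rw [← hcount (f c)]
  refine card_lt_card ⟨fun x hx => ?_, fun hsub => ?_⟩
  · simp only [mem_filter] at hx ⊢
    exact ⟨hx.1, hx.2.1⟩
  · simpa using hsub (mem_filter.mpr ⟨mem_univ c, rfl⟩)

lemma rowRank_lt_rowRank {c c' : Fin n} (he : f c = f c') (hlt : c < c') :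
    rowRank f c < rowRank f c' := by
  refine card_lt_card ⟨fun x hx => ?_, fun hsub => ?_⟩
  · simp only [mem_filter] at hx ⊢
    exact ⟨hx.1, he ▸ hx.2.1, hx.2.2.trans hlt⟩
  · simpa using hsub (mem_filter.mpr ⟨mem_univ c, he, hlt⟩)

lemma blowRow_le_blowupDec (c : Fin n) : blowRow a (f c) ≤ blowupDec a f c :=
  Nat.le_add_right _ _

lemma blowupDec_lt_blowRow_succ (hcount : ∀ i, #{c | f c = i} = a.getD i 0) (c : Fin n) :
    blowupDec a f c < blowRow a (f c + 1) := by
  have := rowRank_lt hcount c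
  rw [blowupDec_apply, blowRow_succ]
  omega

lemma blowupDec_lt_of_lt (hcount : ∀ i, #{c | f c = i} = a.getD i 0) {c c' : Fin n}
    (h : f c < f c') : blowupDec a f c < blowupDec a f c' :=
  calc blowupDec a f c < blowRow a (f c + 1) := blowupDec_lt_blowRow_succ hcount c
    _ ≤ blowRow a (f c') := blowRow_mono a h
    _ ≤ blowupDec a f c' := blowRow_le_blowupDec c'

lemma blowupDec_lt_of_eq_of_lt (hcount : ∀ i, #{c | f c = i} = a.getD i 0) {c c' : Fin n}
    (he : f c = f c') (hlt : c < c') : blowupDec a f c' < blowupDec a f c := by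
  have hrank := rowRank_lt_rowRank he hlt
  have hbound := rowRank_lt hcount c'
  rw [blowupDec_apply, blowupDec_apply, he]
  rw [← he] at hbound ⊢
  omega

lemma le_of_blowupDec_lt (hcount : ∀ i, #{c | f c = i} = a.getD i 0) {c c' : Fin n}
    (h : blowupDec a f c < blowupDec a f c') : f c ≤ f c' :=
  not_lt.mp fun h' => (blowupDec_lt_of_lt hcount h').not_gt h

lemma blowupDec_injective (hcount : ∀ i, #{c | f c = i} = a.getD i 0) :
    Function.Injective (blowupDec a f) := by
  intro c c' h
  have he : f c = f c' := le_antisymm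
    (not_lt.mp fun h' => (blowupDec_lt_of_lt hcount h').ne' h)
    (not_lt.mp fun h' => (blowupDec_lt_of_lt hcount h').ne h)
  rcases lt_trichotomy c c' with hlt | rfl | hgt
  · exact absurd h (blowupDec_lt_of_eq_of_lt hcount he hlt).ne'
  · rfl
  · exact absurd h (blowupDec_lt_of_eq_of_lt hcount he.symm hgt).ne

lemma blowupDec_lt_blowRow {m : ℕ} (hcount : ∀ i, #{c | f c = i} = a.getD i 0)
    (hrow : ∀ c, f c < m) (c : Fin n) : blowupDec a f c < blowRow a m :=
  (blowupDec_lt_blowRow_succ hcount c).trans_le (blowRow_mono a (hrow c))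

lemma getD_blowShape_blowupDec {lam : List ℕ} (hcount : ∀ i, #{c | f c = i} = a.getD i 0)
    (hrow : ∀ c, f c < lam.length) (c : Fin n) :
    (blowShape lam a).getD (blowupDec a f c) 0 = lam.getD (f c) 0 :=
  getD_blowShape_blowRow_add lam a (hrow c) (by have := rowRank_lt hcount c; omega)

lemma fContains_312_or_212_of_blowupDec {lam : List ℕ}
    (hcount : ∀ i, #{c | f c = i} = a.getD i 0) (hrow : ∀ c, f c < lam.length)
    (h : FContains (blowShape lam a) (blowupDec a f) [3, 1, 2]) :
    FContains lam f [3, 1, 2] ∨ FContains lam f [2, 1, 2] := by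
  obtain ⟨c, hc, h12, h20, hshape⟩ := fContains_312_iff.mp h
  simp only [getD_blowShape_blowupDec hcount hrow] at hshape
  have hf12 : f (c 1) < f (c 2) := (le_of_blowupDec_lt hcount h12).lt_of_ne fun he =>
    (blowupDec_lt_of_eq_of_lt hcount he (hc (by decide))).not_gt h12
  rcases (le_of_blowupDec_lt hcount h20).lt_or_eq with hf20 | hf20
  · exact .inl (fContains_312_iff.mpr ⟨c, hc, hf12, hf20, hshape⟩)
  · exact .inr (fContains_212_iff.mpr ⟨c, hc, hf12, hf20.symm, hshape⟩)

lemma fContains_blowupDec_of_312 {lam : List ℕ}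
    (hcount : ∀ i, #{c | f c = i} = a.getD i 0) (hrow : ∀ c, f c < lam.length)
    (h : FContains lam f [3, 1, 2]) : FContains (blowShape lam a) (blowupDec a f) [3, 1, 2] := by
  obtain ⟨c, hc, h12, h20, hshape⟩ := fContains_312_iff.mp h
  refine fContains_312_iff.mpr ⟨c, hc, blowupDec_lt_of_lt hcount h12,
    blowupDec_lt_of_lt hcount h20, ?_⟩
  simpa only [getD_blowShape_blowupDec hcount hrow] using hshape

lemma fContains_blowupDec_of_212 {lam : List ℕ}
    (hcount : ∀ i, #{c | f c = i} = a.getD i 0) (hrow : ∀ c, f c < lam.length)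
    (h : FContains lam f [2, 1, 2]) : FContains (blowShape lam a) (blowupDec a f) [3, 1, 2] := by
  obtain ⟨c, hc, h12, h02, hshape⟩ := fContains_212_iff.mp h
  refine fContains_312_iff.mpr ⟨c, hc, blowupDec_lt_of_lt hcount h12,
    blowupDec_lt_of_eq_of_lt hcount h02 (hc (by decide)), ?_⟩
  simpa only [getD_blowShape_blowupDec hcount hrow] using hshape

end DecreasingBlowup

theorem stmt_13_general (lam a : List ℕ) (ha : a.length = lam.length)
    (n : ℕ) (hsum : a.sum = n)
    (f : Fin n → ℕ)
    (hvalid : ∀ c : Fin n, (c : ℕ) < lam.getD (f c) 0)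
    (hcount : ∀ i, (Finset.univ.filter fun c => f c = i).card = a.getD i 0) :
    (¬ FContains lam f [3, 1, 2] ∧ ¬ FContains lam f [2, 1, 2]) ↔
      blowupDec a f ∈
        FillSet n (blowShape lam a) (List.replicate (blowShape lam a).length 1)
          [[3, 1, 2]] := by
  have hrow : ∀ c, f c < lam.length := fun c => List.lt_length_of_lt_getD_zero (hvalid c)
  have hrows : blowRow a lam.length = n := by rw [← ha, blowRow_length, hsum]
  have hlen : (blowShape lam a).length = n := (blowShape_length lam a).trans hrows
  have hlt : ∀ c, blowupDec a f c < n := fun c => hrows ▸ blowupDec_lt_blowRow hcount hrow c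
  constructor
  · rintro ⟨h312, h212⟩
    refine ⟨fun c => ?_, fun i => ?_, ?_⟩
    · rw [getD_blowShape_blowupDec hcount hrow]
      exact hvalid c
    · rw [hlen]
      exact card_filter_eq_getD_replicate_one (blowupDec_injective hcount) hlt i
    · simp only [List.mem_singleton, forall_eq]
      exact fun h => (fContains_312_or_212_of_blowupDec hcount hrow h).elim h312 h212
  · rintro ⟨-, -, havoid⟩
    have h312 := havoid _ (List.mem_singleton_self _)
    exact ⟨fun h => h312 (fContains_blowupDec_of_312 hcount hrow h),
      fun h => h312 (fContains_blowupDec_of_212 hcount hrow h)⟩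

/-- A filling of `lam` with one 1 per column and `a.getD i 0` ones in row `i` avoids both
312 and 212 if and only if its decreasing blowup is a 312-avoiding full rook placement of
the blown-up shape. -/
theorem stmt_13 (lam a : List ℕ) (hF : IsFerrers lam) (ha : a.length = lam.length)
    (hpos : ∀ t ∈ a, 0 < t) (n : ℕ) (hn : n = lam.getD 0 0) (hsum : a.sum = n)
    (f : Fin n → ℕ)
    (hvalid : ∀ c : Fin n, (c : ℕ) < lam.getD (f c) 0)
    (hcount : ∀ i, (Finset.univ.filter fun c => f c = i).card = a.getD i 0) :
    (¬ FContains lam f [3, 1, 2] ∧ ¬ FContains lam f [2, 1, 2]) ↔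
      blowupDec a f ∈
        FillSet n (blowShape lam a) (List.replicate (blowShape lam a).length 1)
          [[3, 1, 2]] :=
  stmt_13_general lam a ha n hsum f hvalid hcount
end
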